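/- Let G be a finite connected graph and let M, H, H' be maximally intersecting matchings in G. On every maximal H-H' alternating chain with an even number of edges, the number of its edges lying in H ∩ M is at least the number of its edges lying in H' ∩ M. -/

import Mathlib

variable {V : Type*}

/-- A matching of `G`, given as a set of edges: a set of edges of `G` that are
pairwise non-adjacent (no two distinct edges share a vertex). -/
def IsMatchingSet (G : SimpleGraph V) (M : Set (Sym2 V)) : Prop :=
  M ⊆ G.edgeSet ∧ ∀ e ∈ M, ∀ f ∈ M, e ≠ f → ∀ v : V, ¬(v ∈ e ∧ v ∈ f)

/-- ν(G): the maximum size of a matching of `G`. -/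
noncomputable def matchingNumber (G : SimpleGraph V) : ℕ :=
  sSup {n | ∃ M : Set (Sym2 V), IsMatchingSet G M ∧ M.ncard = n}

/-- λ(G): the maximum of |H| + |H'| over pairs (H, H') of disjoint matchings of `G`. -/
noncomputable def lambdaParam (G : SimpleGraph V) : ℕ :=
  sSup {n | ∃ H H' : Set (Sym2 V), IsMatchingSet G H ∧ IsMatchingSet G H' ∧
    Disjoint H H' ∧ H.ncard + H'.ncard = n}

/-- μ(G): the maximum of |H| over pairs (H, H') of disjoint matchings of `G` with
|H| + |H'| = λ(G). -/
noncomputable def muParam (G : SimpleGraph V) : ℕ :=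
  sSup {n | ∃ H H' : Set (Sym2 V), IsMatchingSet G H ∧ IsMatchingSet G H' ∧
    Disjoint H H' ∧ H.ncard + H'.ncard = lambdaParam G ∧ H.ncard = n}

/-- A list of edges alternately lies in `A ∖ B` and `B ∖ A`. -/
def AltList (A B : Set (Sym2 V)) (l : List (Sym2 V)) : Prop :=
  (∀ e ∈ l, (e ∈ A ∧ e ∉ B) ∨ (e ∈ B ∧ e ∉ A)) ∧
  List.Chain' (fun e f => ¬(e ∈ A ↔ f ∈ A)) l

/-- An `A`-`B` alternating path in `G`: a (nontrivial) path whose edges alternately lie in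
`A ∖ B` and `B ∖ A`. -/
def IsAltPath (G : SimpleGraph V) (A B : Set (Sym2 V)) {u v : V} (p : G.Walk u v) : Prop :=
  0 < p.length ∧ p.IsPath ∧ AltList A B p.edges

/-- A maximal `A`-`B` alternating path: an alternating path that cannot be extended to a
longer alternating path at either of its ends. -/
def IsMaxAltPath (G : SimpleGraph V) (A B : Set (Sym2 V)) {u v : V} (p : G.Walk u v) : Prop :=
  IsAltPath G A B p ∧
  (∀ w, ∀ h : G.Adj w u, ¬ IsAltPath G A B (SimpleGraph.Walk.cons h p)) ∧
  (∀ w, ∀ h : G.Adj w v, ¬ IsAltPath G A B (SimpleGraph.Walk.cons h p.reverse))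

/-- `M` is a maximum matching of `G`. -/
def IsMaxMatching (G : SimpleGraph V) (M : Set (Sym2 V)) : Prop :=
  IsMatchingSet G M ∧ ∀ M' : Set (Sym2 V), IsMatchingSet G M' → M'.ncard ≤ M.ncard

/-- `(H, H')` is a pair of disjoint matchings of `G` with `|H| + |H'| = λ(G)` and
`|H| = μ(G)`. -/
def IsLambdaMuPair (G : SimpleGraph V) (H H' : Set (Sym2 V)) : Prop :=
  IsMatchingSet G H ∧ IsMatchingSet G H' ∧ Disjoint H H' ∧
  H.ncard + H'.ncard = lambdaParam G ∧ H.ncard = muParam G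

/-- The matchings `M`, `H`, `H'` are maximally intersecting:
(i) `M` is a maximum matching; (ii) `(H, H') ∈ Λ(G)` with `|H| = μ(G)`;
(iii) `|M ∩ (H ∪ H')|` is maximum among all such triples;
(iv) `|M ∩ H|` is maximum among all such triples also satisfying (iii). -/
def MaxIntersecting (G : SimpleGraph V) (M H H' : Set (Sym2 V)) : Prop :=
  IsMaxMatching G M ∧ IsLambdaMuPair G H H' ∧
  (∀ M₂ H₂ H₂' : Set (Sym2 V), IsMaxMatching G M₂ → IsLambdaMuPair G H₂ H₂' →
    (M₂ ∩ (H₂ ∪ H₂')).ncard ≤ (M ∩ (H ∪ H')).ncard) ∧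
  (∀ M₂ H₂ H₂' : Set (Sym2 V), IsMaxMatching G M₂ → IsLambdaMuPair G H₂ H₂' →
    (M₂ ∩ (H₂ ∪ H₂')).ncard = (M ∩ (H ∪ H')).ncard → (M₂ ∩ H₂).ncard ≤ (M ∩ H).ncard)

/-!
Exchanging `H` and `H'` along an even alternating chain `C` preserves `|H|`, `|H'|` and
`H ∪ H'`, so if the exchanged sets are again matchings, condition (iv) applied to the new triple
gives `|M ∩ H' ∩ C| ≤ |M ∩ H ∩ C|`. They are matchings because no `H`-edge off `C` meets an
`H'`-edge of `C`: every vertex of an even alternating cycle lies on an `H`-edge of the cycle, and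
on an even maximal alternating path the only vertex avoiding the path's `H`-edges is an end whose
path edge lies in `H'`; an `H`-edge there would extend the path.
-/

theorem List.IsChain.not_iff_head_getLast_of_even {α : Type*} {P : α → Prop} :
    ∀ {l : List α} (hl : l ≠ []), l.IsChain (fun a b => ¬(P a ↔ P b)) → Even l.length →
      ¬(P (l.head hl) ↔ P (l.getLast hl))
  | [_], _, _, hev => by simp at hev
  | [_, _], _, hc, _ => by simpa using hc
  | a :: b :: c :: l, _, hc, hev => by
    rw [List.isChain_cons_cons, List.isChain_cons_cons] at hc
    have ih := hc.2.2.not_iff_head_getLast_of_even (List.cons_ne_nil c l)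
      (by simpa [Nat.even_add_one] using hev)
    simp only [List.head_cons, List.getLast_cons_cons] at ih ⊢
    tauto

theorem List.IsChain.countP_eq_countP_not_of_even {α : Type*} {P : α → Prop} [DecidablePred P] :
    ∀ {l : List α}, l.IsChain (fun a b => ¬(P a ↔ P b)) → Even l.length →
      l.countP (fun a => P a) = l.countP (fun a => ¬P a)
  | [], _, _ => rfl
  | [_], _, hev => by simp at hev
  | a :: b :: l, hc, hev => by
    rw [List.isChain_cons_cons] at hc
    have ih := hc.2.tail.countP_eq_countP_not_of_even (by simpa [Nat.even_add_one] using hev)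
    simp only [List.countP_cons]
    by_cases ha : P a <;> by_cases hb : P b <;> simp_all

theorem Set.ncard_inter_setOf_mem {α : Type*} (S : Set α) [DecidablePred (· ∈ S)] {l : List α}
    (hl : l.Nodup) : (S ∩ {a | a ∈ l}).ncard = l.countP (· ∈ S) := by
  classical
  have hS : S ∩ {a | a ∈ l} = ↑(l.filter (· ∈ S)).toFinset := by
    ext a
    simp [and_comm]
  rw [hS, Set.ncard_coe_finset, List.toFinset_card_of_nodup (hl.filter _),
    List.countP_eq_length_filter]

theorem Set.ncard_diff_union_inter_add {α : Type*} [Finite α] {A B : Set α} (C : Set α)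
    (hAB : Disjoint A B) : (A \ C ∪ B ∩ C).ncard + (A ∩ C).ncard = A.ncard + (B ∩ C).ncard := by
  rw [Set.ncard_union_eq (hAB.mono Set.sdiff_subset Set.inter_subset_left),
    ← Set.ncard_inter_add_ncard_sdiff_eq_ncard A C]
  omega

namespace AltList

variable {A B : Set (Sym2 V)} {l : List (Sym2 V)}

theorem mem_right_iff (h : AltList A B l) {e : Sym2 V} (he : e ∈ l) : e ∈ B ↔ e ∉ A := by
  rcases h.1 e he with h | h <;> tauto

theorem symm (h : AltList A B l) : AltList B A l :=
  ⟨fun e he => (h.1 e he).symm,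
    List.IsChain.imp_of_mem_imp (fun a b ha hb hab => by
      rw [h.mem_right_iff ha, h.mem_right_iff hb]; tauto) h.2⟩

theorem reverse (h : AltList A B l) : AltList A B l.reverse :=
  ⟨fun e he => h.1 e (List.mem_reverse.mp he),
    List.isChain_reverse.mpr (h.2.imp fun _ _ hab hba => hab hba.symm)⟩

theorem cons {e : Sym2 V} (he : e ∈ A) (heB : e ∉ B) (hl : ∀ f ∈ l.head?, f ∉ A)
    (h : AltList A B l) : AltList A B (e :: l) :=
  ⟨List.forall_mem_cons.mpr ⟨Or.inl ⟨he, heB⟩, h.1⟩,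
    List.isChain_cons.mpr ⟨fun f hf => by simp [he, hl f hf], h.2⟩⟩

theorem ncard_inter_eq_of_even (h : AltList A B l) (hl : l.Nodup) (hev : Even l.length) :
    (A ∩ {e | e ∈ l}).ncard = (B ∩ {e | e ∈ l}).ncard := by
  classical
  rw [Set.ncard_inter_setOf_mem A hl, Set.ncard_inter_setOf_mem B hl,
    List.IsChain.countP_eq_countP_not_of_even h.2 hev]
  exact List.countP_congr fun e he => by simp [h.mem_right_iff he]

end AltList

theorem IsMatchingSet.eq_of_mem {G : SimpleGraph V} {M : Set (Sym2 V)} (hM : IsMatchingSet G M)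
    {e f : Sym2 V} (he : e ∈ M) (hf : f ∈ M) {x : V} (hxe : x ∈ e) (hxf : x ∈ f) : e = f := by
  by_contra hef
  exact hM.2 e he f hf hef x ⟨hxe, hxf⟩

def CrossFree (A B C : Set (Sym2 V)) : Prop :=
  ∀ e ∈ A \ C, ∀ f ∈ B ∩ C, ∀ x ∈ e, x ∉ f

theorem IsMatchingSet.diff_union_inter {G : SimpleGraph V} {A B C : Set (Sym2 V)}
    (hA : IsMatchingSet G A) (hB : IsMatchingSet G B) (hC : CrossFree A B C) :
    IsMatchingSet G (A \ C ∪ B ∩ C) := by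
  refine ⟨Set.union_subset (Set.sdiff_subset.trans hA.1) (Set.inter_subset_left.trans hB.1), ?_⟩
  rintro e (he | he) f (hf | hf) hef x ⟨hxe, hxf⟩
  · exact hA.2 e he.1 f hf.1 hef x ⟨hxe, hxf⟩
  · exact hC e he f hf x hxe hxf
  · exact hC f hf e he x hxf hxe
  · exact hB.2 e he.1 f hf.1 hef x ⟨hxe, hxf⟩

namespace SimpleGraph.Walk

variable {G : SimpleGraph V} {A : Set (Sym2 V)} {u v : V}

theorem exists_mem_edges_of_isChain_alt {x : V} (p : G.Walk u v)
    (hp : p.edges.IsChain (fun e f => ¬(e ∈ A ↔ f ∈ A))) (hx : x ∈ p.support)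
    (hxu : x ≠ u) (hxv : x ≠ v) : ∃ g ∈ p.edges, g ∈ A ∧ x ∈ g := by
  induction p with
  | nil => exact absurd (by simpa using hx) hxu
  | @cons u y v h q ih =>
    rw [edges_cons] at hp ⊢
    have hxq : x ∈ q.support := (List.mem_cons.mp hx).resolve_left hxu
    by_cases hxy : x = y
    · subst hxy
      cases q with
      | nil => exact absurd rfl hxv
      | @cons _ z _ h' r =>
        rw [edges_cons, List.isChain_cons_cons] at hp
        by_cases hA : s(u, x) ∈ A
        · exact ⟨_, List.mem_cons_self, hA, Sym2.mem_mk_right _ _⟩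
        · exact ⟨s(x, z), by simp, by tauto, Sym2.mem_mk_left _ _⟩
    · obtain ⟨g, hg, hgA, hxg⟩ := ih hp.tail hxq hxy hxv
      exact ⟨g, List.mem_cons_of_mem _ hg, hgA, hxg⟩

theorem not_iff_mk_start_snd_mk_penultimate_end_of_even {p : G.Walk u v} (hnil : ¬p.Nil)
    (hp : p.edges.IsChain (fun e f => ¬(e ∈ A ↔ f ∈ A))) (hev : Even p.length) :
    ¬(s(u, p.snd) ∈ A ↔ s(p.penultimate, v) ∈ A) := by
  simpa using hp.not_iff_head_getLast_of_even (edges_eq_nil.not.mpr hnil) (by simpa using hev)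

theorem IsPath.eq_mk_start_snd_of_mem {p : G.Walk u v} (hp : p.IsPath) {e : Sym2 V}
    (he : e ∈ p.edges) (hu : u ∈ e) : e = s(u, p.snd) := by
  cases p with
  | nil => simp at he
  | cons h q =>
    rcases List.mem_cons.mp he with rfl | he
    · simp
    · exact absurd (q.mem_support_of_mem_edges he hu) ((cons_isPath_iff h q).mp hp).2

theorem IsCycle.crossFree {B : Set (Sym2 V)} {w : G.Walk u u} (hA : IsMatchingSet G A)
    (hc : w.IsCycle) (halt : w.edges.IsChain (fun e f => ¬(e ∈ A ↔ f ∈ A)))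
    (hev : Even w.length) : CrossFree A B {e | e ∈ w.edges} := by
  rintro e ⟨he, heC⟩ f ⟨-, hfC⟩ x hxe hxf
  obtain ⟨g, hg, hgA, hxg⟩ : ∃ g ∈ w.edges, g ∈ A ∧ x ∈ g := by
    by_cases hxu : x = u
    · subst hxu
      have := not_iff_mk_start_snd_mk_penultimate_end_of_even hc.not_nil halt hev
      by_cases hA₁ : s(x, w.snd) ∈ A
      · exact ⟨_, w.mk_start_snd_mem_edges hc.not_nil, hA₁, Sym2.mem_mk_left _ _⟩
      · exact ⟨_, w.mk_penultimate_end_mem_edges hc.not_nil, by tauto, Sym2.mem_mk_right _ _⟩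
    · exact w.exists_mem_edges_of_isChain_alt halt (w.mem_support_of_mem_edges hfC hxf) hxu hxu
  exact heC (hA.eq_of_mem he hgA hxe hxg ▸ hg)

end SimpleGraph.Walk

section AlternatingPaths

open SimpleGraph

variable {G : SimpleGraph V} {A B : Set (Sym2 V)} {u v : V} {p : G.Walk u v}

theorem IsAltPath.symm (h : IsAltPath G A B p) : IsAltPath G B A p :=
  ⟨h.1, h.2.1, h.2.2.symm⟩

theorem IsAltPath.reverse (h : IsAltPath G A B p) : IsAltPath G A B p.reverse :=
  ⟨by simpa using h.1, h.2.1.reverse, by simpa only [Walk.edges_reverse] using h.2.2.reverse⟩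

theorem IsMaxAltPath.symm (h : IsMaxAltPath G A B p) : IsMaxAltPath G B A p :=
  ⟨h.1.symm, fun w hw hc => h.2.1 w hw hc.symm, fun w hw hc => h.2.2 w hw hc.symm⟩

theorem IsMaxAltPath.reverse (h : IsMaxAltPath G A B p) : IsMaxAltPath G A B p.reverse :=
  ⟨h.1.reverse, h.2.2, by simpa only [Walk.reverse_reverse] using h.2.1⟩

theorem IsMaxAltPath.not_mem_of_mem_start (hA : IsMatchingSet G A) (hAB : Disjoint A B)
    (hp : IsMaxAltPath G A B p) (hev : Even p.length) {e f : Sym2 V} (he : e ∈ A)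
    (heC : e ∉ p.edges) (hf : f ∈ B) (hfC : f ∈ p.edges) (huf : u ∈ f) : u ∉ e := by
  obtain ⟨⟨hlen, hpath, halt⟩, hext, -⟩ := hp
  intro hue
  have hnil : ¬p.Nil := Walk.not_nil_iff_lt_length.mpr hlen
  have hfirst : s(u, p.snd) ∉ A :=
    hpath.eq_mk_start_snd_of_mem hfC huf ▸ Set.disjoint_right.mp hAB hf
  have hlast : s(p.penultimate, v) ∈ A := by
    have := Walk.not_iff_mk_start_snd_mk_penultimate_end_of_even hnil halt.2 hev
    tauto
  obtain ⟨w, rfl⟩ := Sym2.mem_iff_exists.mp hue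
  have hadj : G.Adj u w := hA.1 he
  have hw : w ∉ p.support := by
    intro hw
    by_cases hwv : w = v
    · subst hwv
      exact heC (hA.eq_of_mem he hlast (Sym2.mem_mk_right _ _) (Sym2.mem_mk_right _ _) ▸
        p.mk_penultimate_end_mem_edges hnil)
    · obtain ⟨g, hg, hgA, hwg⟩ := p.exists_mem_edges_of_isChain_alt halt.2 hw hadj.ne' hwv
      exact heC (hA.eq_of_mem he hgA (Sym2.mem_mk_right _ _) hwg ▸ hg)
  refine hext w hadj.symm ⟨by simp, hpath.cons hw, ?_⟩
  rw [Walk.edges_cons, Sym2.eq_swap]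
  refine halt.cons he (Set.disjoint_left.mp hAB he) fun g hg => ?_
  rw [List.head?_eq_some_head (Walk.edges_eq_nil.not.mpr hnil), Option.mem_some_iff,
    Walk.head_edges_eq_mk_start_snd] at hg
  exact hg ▸ hfirst

theorem IsMaxAltPath.crossFree (hA : IsMatchingSet G A) (hAB : Disjoint A B)
    (hp : IsMaxAltPath G A B p) (hev : Even p.length) : CrossFree A B {e | e ∈ p.edges} := by
  rintro e ⟨he, heC⟩ f ⟨hf, hfC⟩ x hxe hxf
  by_cases hxu : x = u
  · subst hxu
    exact hp.not_mem_of_mem_start hA hAB hev he heC hf hfC hxf hxe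
  by_cases hxv : x = v
  · subst hxv
    exact hp.reverse.not_mem_of_mem_start hA hAB (by simpa using hev) he (by simpa using heC) hf
      (by simpa using hfC) hxf hxe
  obtain ⟨g, hg, hgA, hxg⟩ :=
    p.exists_mem_edges_of_isChain_alt hp.1.2.2.2 (p.mem_support_of_mem_edges hfC hxf) hxu hxv
  exact heC (hA.eq_of_mem he hgA hxe hxg ▸ hg)

end AlternatingPaths

section Exchange

variable [Finite V] {G : SimpleGraph V} {M H H' : Set (Sym2 V)}

theorem MaxIntersecting.ncard_inter_le_of_exchange (hmax : MaxIntersecting G M H H')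
    {C : Set (Sym2 V)} (hC : (H ∩ C).ncard = (H' ∩ C).ncard)
    (h₁ : IsMatchingSet G (H \ C ∪ H' ∩ C)) (h₂ : IsMatchingSet G (H' \ C ∪ H ∩ C)) :
    (H' ∩ M ∩ C).ncard ≤ (H ∩ M ∩ C).ncard := by
  obtain ⟨hM, ⟨-, -, hdisj, hlam, hmu⟩, -, hiv⟩ := hmax
  have hcard₁ := Set.ncard_diff_union_inter_add C hdisj
  have hcard₂ := Set.ncard_diff_union_inter_add C hdisj.symm
  have hdisj₁₂ : Disjoint (H \ C ∪ H' ∩ C) (H' \ C ∪ H ∩ C) := by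
    have := Set.disjoint_left.mp hdisj
    refine Set.disjoint_left.mpr fun e h h' => ?_
    simp only [Set.mem_union, Set.mem_sdiff, Set.mem_inter_iff] at h h'
    tauto
  have hunion : H \ C ∪ H' ∩ C ∪ (H' \ C ∪ H ∩ C) = H ∪ H' := by
    ext e
    simp only [Set.mem_union, Set.mem_sdiff, Set.mem_inter_iff]
    tauto
  have hle := hiv M _ _ hM ⟨h₁, h₂, hdisj₁₂, by omega, by omega⟩ (by rw [hunion])
  have hM₁ : M ∩ (H \ C ∪ H' ∩ C) = (M ∩ H) \ C ∪ (M ∩ H') ∩ C := by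
    ext e
    simp only [Set.mem_union, Set.mem_sdiff, Set.mem_inter_iff]
    tauto
  have hcardM := Set.ncard_diff_union_inter_add C
    (hdisj.mono Set.inter_subset_right Set.inter_subset_right) (A := M ∩ H) (B := M ∩ H')
  rw [← hM₁] at hcardM
  rw [Set.inter_comm H', Set.inter_comm H]
  omega

theorem MaxIntersecting.ncard_inter_le_of_altList (hmax : MaxIntersecting G M H H')
    {l : List (Sym2 V)} (hl : l.Nodup) (halt : AltList H H' l) (hev : Even l.length)
    (h₁ : CrossFree H H' {e | e ∈ l}) (h₂ : CrossFree H' H {e | e ∈ l}) :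
    (H' ∩ M ∩ {e | e ∈ l}).ncard ≤ (H ∩ M ∩ {e | e ∈ l}).ncard :=
  hmax.ncard_inter_le_of_exchange (halt.ncard_inter_eq_of_even hl hev)
    (hmax.2.1.1.diff_union_inter hmax.2.1.2.1 h₁) (hmax.2.1.2.1.diff_union_inter hmax.2.1.1 h₂)

end Exchange

theorem stmt_15_general [Fintype V] (G : SimpleGraph V)
    (M H H' : Set (Sym2 V)) (hmax : MaxIntersecting G M H H') :
    (∀ (v : V) (w : G.Walk v v), w.IsCycle → AltList H H' w.edges → Even w.length →
      ((H' ∩ M) ∩ {e | e ∈ w.edges}).ncard ≤ ((H ∩ M) ∩ {e | e ∈ w.edges}).ncard) ∧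
    (∀ (u v : V) (p : G.Walk u v), IsMaxAltPath G H H' p → Even p.length →
      ((H' ∩ M) ∩ {e | e ∈ p.edges}).ncard ≤ ((H ∩ M) ∩ {e | e ∈ p.edges}).ncard) := by
  obtain ⟨hH, hH', hdisj, -⟩ := hmax.2.1
  refine ⟨fun v w hc halt hev => ?_, fun u v p hp hev => ?_⟩
  · exact hmax.ncard_inter_le_of_altList hc.edges_nodup halt (by simpa using hev)
      (hc.crossFree hH halt.2 hev) (hc.crossFree hH' halt.symm.2 hev)
  · exact hmax.ncard_inter_le_of_altList hp.1.2.1.edges_nodup hp.1.2.2 (by simpa using hev)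
      (hp.crossFree hH hdisj hev) (hp.symm.crossFree hH' hdisj.symm hev)

/-- For maximally intersecting matchings `M`, `H`, `H'` of a finite connected
graph `G`, on every maximal `H`-`H'` alternating chain (a cycle, or a maximal alternating
path) with an even number of edges, the number of edges lying in `H ∩ M` is at least the
number of edges lying in `H' ∩ M`. -/
theorem stmt_15 [Fintype V] (G : SimpleGraph V) (hconn : G.Connected)
    (M H H' : Set (Sym2 V)) (hmax : MaxIntersecting G M H H') :
    (∀ (v : V) (w : G.Walk v v), w.IsCycle → AltList H H' w.edges → Even w.length →
      ((H' ∩ M) ∩ {e | e ∈ w.edges}).ncard ≤ ((H ∩ M) ∩ {e | e ∈ w.edges}).ncard) ∧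
    (∀ (u v : V) (p : G.Walk u v), IsMaxAltPath G H H' p → Even p.length →
      ((H' ∩ M) ∩ {e | e ∈ p.edges}).ncard ≤ ((H ∩ M) ∩ {e | e ∈ p.edges}).ncard) :=
  stmt_15_general G M H H' hmax
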